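/- arXiv:2509.22588 — 2 statements merged into one kernel-verified Lean document; each statement's English description precedes it below -/
import Mathlib

section
/- Let z(s) : [a,b] → ℂ be an arc-length parametrization (|z'(s)| = 1) of a Dini-smooth Jordan arc, with ω the modulus of continuity of z'. Then there exists δ > 0 such that for every interval I ⊂ [a,b] of length |I| < δ and every point s₀ ∈ I, the total variation over I ∖ {s₀} of any continuous branch of the argument s ↦ arg(z(s) − z(s₀)) is at most 8 ∫₀^δ ω(t)/t dt. -/
open Filter Topology MeasureTheory Set

noncomputable section

/-- The supremum norm of `f` over the set `Γ`. -/
def supNorm (Γ : Set ℂ) (f : ℂ → ℂ) : ℝ := sSup ((fun z => ‖f z‖) '' Γ)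

/-- `Γ` is a Jordan curve: the image of a continuous `2π`-periodic map `ℝ → ℂ` that is
injective modulo the period. -/
def IsJordanCurve (Γ : Set ℂ) : Prop :=
  ∃ f : ℝ → ℂ, Continuous f ∧ Function.Periodic f (2 * Real.pi) ∧
    (∀ s t : ℝ, f s = f t → ∃ n : ℤ, t - s = n * (2 * Real.pi)) ∧
    Γ = Set.range f

/-- The modulus of continuity of `g` on the interval `[a, b]`, evaluated at `t`. -/
def modCont (g : ℝ → ℂ) (a b t : ℝ) : ℝ :=
  sSup {d : ℝ | ∃ s₁ ∈ Set.Icc a b, ∃ s₂ ∈ Set.Icc a b, |s₁ - s₂| ≤ t ∧ d = ‖g s₁ - g s₂‖}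

/-- `γ`, with derivative `γ'`, parametrizes a Dini-smooth Jordan arc on `[a, b]`:
`γ'` is continuous and nonvanishing on `[a, b]` and its modulus of continuity `ω`
satisfies `∫₀¹ ω(t)/t dt < ∞`. -/
structure IsDiniSmoothArc (γ γ' : ℝ → ℂ) (a b : ℝ) : Prop where
  lt : a < b
  inj : Set.InjOn γ (Set.Icc a b)
  deriv : ∀ s ∈ Set.Icc a b, HasDerivWithinAt γ (γ' s) (Set.Icc a b) s
  cont : ContinuousOn γ' (Set.Icc a b)
  nonzero : ∀ s ∈ Set.Icc a b, γ' s ≠ 0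
  dini : MeasureTheory.IntegrableOn (fun t => modCont γ' a b t / t) (Set.Ioc (0 : ℝ) 1)

/-- A piecewise Dini-smooth Jordan curve: a Jordan curve which is the union of finitely many
Dini-smooth arcs. -/
def IsPiecewiseDiniSmoothJordanCurve (Γ : Set ℂ) : Prop :=
  IsJordanCurve Γ ∧
    ∃ (N : ℕ) (γ γ' : Fin N → ℝ → ℂ) (a b : Fin N → ℝ),
      (∀ i, IsDiniSmoothArc (γ i) (γ' i) (a i) (b i)) ∧
      Γ = ⋃ i, γ i '' Set.Icc (a i) (b i)

/-- The unbounded connected component `Ω` of the complement of `Γ` (in the finite plane). -/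
def exteriorDomain (Γ : Set ℂ) : Set ℂ :=
  {z | z ∈ Γᶜ ∧ ¬ Bornology.IsBounded (connectedComponentIn Γᶜ z)}

/-- `φ` is the canonical exterior conformal map of `Γ` onto `{|w| > 1}` with `φ(∞) = ∞` and
`φ(z)/z → c⁻¹` as `z → ∞`; the constant `c` is then the logarithmic capacity of `Γ`. -/
structure IsExteriorMap (Γ : Set ℂ) (φ : ℂ → ℂ) (c : ℝ) : Prop where
  cpos : 0 < c
  diff : DifferentiableOn ℂ φ (exteriorDomain Γ)
  bij : Set.BijOn φ (exteriorDomain Γ) {w : ℂ | 1 < ‖w‖}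
  tendsto : Filter.Tendsto (fun z => φ z / z)
    (Bornology.cobounded ℂ ⊓ Filter.principal (exteriorDomain Γ)) (nhds ((c : ℂ)⁻¹))

/-- `F` is the `n`-th Faber polynomial of `Γ`: the unique polynomial with
`φ(z)^n − F(z) → 0` as `z → ∞` in the exterior domain. -/
def IsFaberPoly (Γ : Set ℂ) (φ : ℂ → ℂ) (n : ℕ) (F : Polynomial ℂ) : Prop :=
  Filter.Tendsto (fun z => φ z ^ n - F.eval z)
    (Bornology.cobounded ℂ ⊓ Filter.principal (exteriorDomain Γ)) (nhds 0)

/-- `ψ` is the inverse of `φ`, extended to a homeomorphism of `{|w| ≥ 1}` onto the closure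
of the exterior domain; on the unit circle it parametrizes `Γ`. -/
structure IsExteriorParam (Γ : Set ℂ) (φ ψ : ℂ → ℂ) : Prop where
  cont : ContinuousOn ψ {w : ℂ | 1 ≤ ‖w‖}
  inj : Set.InjOn ψ {w : ℂ | 1 ≤ ‖w‖}
  inv : ∀ w : ℂ, 1 < ‖w‖ → ψ w ∈ exteriorDomain Γ ∧ φ (ψ w) = w
  boundary : ∀ w : ℂ, ‖w‖ = 1 → ψ w ∈ Γ
  boundary_surj : ∀ z ∈ Γ, ∃ w : ℂ, ‖w‖ = 1 ∧ ψ w = z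

/-- `T` is the `n`-th Chebyshev polynomial of `Γ`: the monic polynomial of degree `n`
minimizing the supremum norm over `Γ`. -/
def IsChebyshevPoly (Γ : Set ℂ) (n : ℕ) (T : Polynomial ℂ) : Prop :=
  T.Monic ∧ T.natDegree = n ∧
    ∀ P : Polynomial ℂ, P.Monic → P.natDegree = n →
      supNorm Γ (fun z => T.eval z) ≤ supNorm Γ (fun z => P.eval z)

/-- `v` is a secant-argument function of `Γ = ψ(unit circle)` at `θ` (relative to `α` with
`α < θ < α + 2π`): a bounded-variation branch of `t ↦ arg (ψ(e^{it}) − ψ(e^{iθ}))` on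
`[α, α + 2π]`, continuous on `[α, θ)` and on `(θ, α + 2π]`, normalized by `v θ = v(θ+)`
and by requiring the jump `v(θ+) − v(θ−)` to lie in `[0, 2π]`. -/
structure IsSecantArg (ψ : ℂ → ℂ) (θ α : ℝ) (v : ℝ → ℝ) : Prop where
  hα : α < θ
  hθ : θ < α + 2 * Real.pi
  bv : BoundedVariationOn v (Set.Icc α (α + 2 * Real.pi))
  contBefore : ContinuousOn v (Set.Ico α θ)
  contAfter : ContinuousOn v (Set.Ioc θ (α + 2 * Real.pi))
  rightCont : ContinuousWithinAt v (Set.Ici θ) θ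
  jump_mem : ∃ L : ℝ, Filter.Tendsto v (nhdsWithin θ (Set.Iio θ)) (nhds L) ∧
    v θ - L ∈ Set.Icc 0 (2 * Real.pi)
  branch : ∀ t ∈ Set.Icc α (α + 2 * Real.pi), t ≠ θ →
    Complex.exp (Complex.I * (v t : ℂ))
      = (ψ (Complex.exp (Complex.I * (t : ℂ))) - ψ (Complex.exp (Complex.I * (θ : ℂ))))
        / ((‖ψ (Complex.exp (Complex.I * (t : ℂ))) - ψ (Complex.exp (Complex.I * (θ : ℂ)))‖ : ℂ))

/-- The exterior angle of `Γ = ψ(unit circle)` at the boundary point `ψ(e^{iθ})` equals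
`lam * π`, expressed through the jump `v(θ+) − v(θ−) = lam * π` of a secant-argument
function at `θ`. -/
def HasExteriorAngleAt (ψ : ℂ → ℂ) (θ lam : ℝ) : Prop :=
  ∃ (α : ℝ) (v : ℝ → ℝ), IsSecantArg ψ θ α v ∧
    Filter.Tendsto v (nhdsWithin θ (Set.Iio θ)) (nhds (v θ - lam * Real.pi))

/-- The set `Θ_Γ = {θ_k + 2πj}` of corner parameters modulo `2π`. -/
def cornerSet {l : ℕ} (θk : Fin l → ℝ) : Set ℝ :=
  {x | ∃ (k : Fin l) (j : ℤ), x = θk k + j * (2 * Real.pi)}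

/-- `(μp, μn)` realizes the Lebesgue–Stieltjes (signed) measure `dv` of `v` on `(α, β]`:
both are finite measures and `μp − μn` has the increments of `v`. -/
structure IsLSPair (v : ℝ → ℝ) (α β : ℝ) (μp μn : MeasureTheory.Measure ℝ) : Prop where
  finp : MeasureTheory.IsFiniteMeasure μp
  finn : MeasureTheory.IsFiniteMeasure μn
  incr : ∀ s t : ℝ, α ≤ s → s ≤ t → t ≤ β →
    (μp (Set.Ioc s t)).toReal - (μn (Set.Ioc s t)).toReal = v t - v s

/-!
The chord `z x - z s₀` differs from the tangent vector `(x - s₀) z'(x)` by at most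
`ω(|x - s₀|) |x - s₀|`. Once `ω ≤ 1/2`, this keeps the chord longer than `|x - s₀| / 2` and bounds
the derivative `Im (z'(x) / (z x - z s₀))` of a continuous branch of `arg (z x - z s₀)` by
`2 ω(|x - s₀|) / |x - s₀|`. Integrating this on either side of `s₀` bounds the variation there
by `2 ∫₀^δ ω(t)/t dt`.
-/

section ModulusOfContinuity

variable {g : ℝ → ℂ} {a b t : ℝ}

lemma modCont_bddAbove (hg : ContinuousOn g (Icc a b)) (t : ℝ) :
    BddAbove {d : ℝ | ∃ s₁ ∈ Icc a b, ∃ s₂ ∈ Icc a b, |s₁ - s₂| ≤ t ∧ d = ‖g s₁ - g s₂‖} := by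
  obtain ⟨C, hC⟩ := isCompact_Icc.exists_bound_of_continuousOn hg
  refine ⟨C + C, ?_⟩
  rintro _ ⟨s₁, h₁, s₂, h₂, -, rfl⟩
  exact (norm_sub_le _ _).trans (add_le_add (hC s₁ h₁) (hC s₂ h₂))

lemma norm_sub_le_modCont (hg : ContinuousOn g (Icc a b)) {s₁ s₂ : ℝ} (h₁ : s₁ ∈ Icc a b)
    (h₂ : s₂ ∈ Icc a b) (ht : |s₁ - s₂| ≤ t) : ‖g s₁ - g s₂‖ ≤ modCont g a b t :=
  le_csSup (modCont_bddAbove hg t) ⟨s₁, h₁, s₂, h₂, ht, rfl⟩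

lemma modCont_nonneg (hg : ContinuousOn g (Icc a b)) (hab : a ≤ b) (ht : 0 ≤ t) :
    0 ≤ modCont g a b t := by
  simpa using norm_sub_le_modCont hg (left_mem_Icc.2 hab) (left_mem_Icc.2 hab)
    (by simpa using ht)

lemma modCont_le {C : ℝ} (hC : 0 ≤ C)
    (h : ∀ s₁ ∈ Icc a b, ∀ s₂ ∈ Icc a b, |s₁ - s₂| ≤ t → ‖g s₁ - g s₂‖ ≤ C) :
    modCont g a b t ≤ C := by
  refine Real.sSup_le ?_ hC
  rintro _ ⟨s₁, h₁, s₂, h₂, ht, rfl⟩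
  exact h s₁ h₁ s₂ h₂ ht

lemma exists_pos_forall_modCont_le (hg : ContinuousOn g (Icc a b)) {ε : ℝ} (hε : 0 < ε) :
    ∃ δ > 0, ∀ t < δ, modCont g a b t ≤ ε := by
  obtain ⟨δ, hδ, hg⟩ := Metric.uniformContinuousOn_iff.1
    (isCompact_Icc.uniformContinuousOn_of_continuous hg) ε hε
  refine ⟨δ, hδ, fun t ht => modCont_le hε.le fun s₁ h₁ s₂ h₂ hs => ?_⟩
  rw [← dist_eq_norm]
  exact (hg s₁ h₁ s₂ h₂ (by rw [Real.dist_eq]; linarith)).le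

lemma norm_mul_sub_sub_le_modCont {z z' : ℝ → ℂ}
    (hz : ∀ s ∈ Icc a b, HasDerivWithinAt z (z' s) (Icc a b) s)
    (hz' : ContinuousOn z' (Icc a b)) {p q : ℝ} (hp : p ∈ Icc a b) (hq : q ∈ Icc a b) :
    ‖((q - p : ℝ) : ℂ) * z' q - (z q - z p)‖ ≤ modCont z' a b |q - p| * |q - p| := by
  have hpq : uIcc p q ⊆ Icc a b := uIcc_subset_Icc hp hq
  have hderiv : ∀ s ∈ uIcc p q,
      HasDerivWithinAt (fun s : ℝ => (s : ℂ) * z' q - z s) (z' q - z' s) (uIcc p q) s := by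
    intro s hs
    simpa using ((hasDerivAt_id (s : ℂ)).comp_ofReal.mul_const (z' q)).hasDerivWithinAt.fun_sub
      ((hz s (hpq hs)).mono hpq)
  have hbound : ∀ s ∈ uIcc p q, ‖z' q - z' s‖ ≤ modCont z' a b |q - p| := fun s hs =>
    norm_sub_le_modCont hz' hq (hpq hs) (abs_sub_right_of_mem_uIcc hs)
  have := (convex_uIcc p q).norm_image_sub_le_of_norm_hasDerivWithin_le hderiv hbound
    left_mem_uIcc right_mem_uIcc
  rw [Real.norm_eq_abs] at this
  calc _ = ‖(q * z' q - z q) - (p * z' q - z p)‖ := by push_cast; ring_nf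
    _ ≤ _ := this

end ModulusOfContinuity

section TangentChord

variable {h ε : ℝ} {ζ D : ℂ}

lemma half_abs_le_norm_of_norm_mul_sub_le (hζ : ‖ζ‖ = 1) (hε : ε ≤ 1 / 2)
    (hD : ‖(h : ℂ) * ζ - D‖ ≤ ε * |h|) : |h| / 2 ≤ ‖D‖ := by
  have : |h| ≤ ‖(h : ℂ) * ζ - D‖ + ‖D‖ := by
    simpa [hζ] using norm_le_norm_sub_add ((h : ℂ) * ζ) D
  nlinarith [abs_nonneg h]

/-- In `ζ / D = (h ζ - D) / (h D) + 1 / h` the main term `1 / h` is real. -/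
lemma abs_im_div_le_of_norm_mul_sub_le (hh : h ≠ 0) (hζ : ‖ζ‖ = 1) (hε : ε ≤ 1 / 2)
    (hD : ‖(h : ℂ) * ζ - D‖ ≤ ε * |h|) : |(ζ / D).im| ≤ 2 * (ε / |h|) := by
  have hhpos : 0 < |h| := abs_pos.2 hh
  have hDlow := half_abs_le_norm_of_norm_mul_sub_le hζ hε hD
  have hD0 : D ≠ 0 := norm_pos_iff.1 (by linarith)
  have hh' : (h : ℂ) ≠ 0 := Complex.ofReal_ne_zero.2 hh
  have hsplit : ζ / D = ((h : ℂ) * ζ - D) / ((h : ℂ) * D) + ((h : ℝ) : ℂ)⁻¹ := by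
    field_simp
    ring
  calc |(ζ / D).im| = |(((h : ℂ) * ζ - D) / ((h : ℂ) * D)).im| := by
        rw [hsplit, Complex.add_im, ← Complex.ofReal_inv, Complex.ofReal_im, add_zero]
    _ ≤ ‖(h : ℂ) * ζ - D‖ / (|h| * ‖D‖) := by
        refine (Complex.abs_im_le_norm _).trans_eq ?_
        rw [norm_div, norm_mul, Complex.norm_real, Real.norm_eq_abs]
    _ ≤ ε * |h| / (|h| * (|h| / 2)) := by gcongr; exact (norm_nonneg _).trans hD
    _ = 2 * (ε / |h|) := by field_simp

end TangentChord

lemma Complex.exp_I_mul_arg {ζ : ℂ} (hζ : ζ ≠ 0) :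
    Complex.exp (Complex.I * (ζ.arg : ℂ)) = ζ / ((‖ζ‖ : ℝ) : ℂ) := by
  have h := Complex.norm_mul_exp_arg_mul_I ζ
  have : ((‖ζ‖ : ℝ) : ℂ) ≠ 0 := Complex.ofReal_ne_zero.2 (norm_ne_zero_iff.2 hζ)
  rw [mul_comm Complex.I, eq_div_iff this, mul_comm, h]

def IsArgBranchOn (A : ℝ → ℝ) (w : ℝ → ℂ) (S : Set ℝ) : Prop :=
  ContinuousOn A S ∧ ∀ s ∈ S, Complex.exp (Complex.I * (A s : ℂ)) = w s / ((‖w s‖ : ℝ) : ℂ)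

namespace IsArgBranchOn

variable {A : ℝ → ℝ} {w : ℝ → ℂ} {S : Set ℝ}

lemma mono {T : Set ℝ} (hA : IsArgBranchOn A w S) (hT : T ⊆ S) : IsArgBranchOn A w T :=
  ⟨hA.1.mono hT, fun s hs => hA.2 s (hT hs)⟩

/-- Near `t`, `A` differs from `A t + arg (w / w t)` by a multiple of `2π` that is continuous,
hence zero. -/
lemma hasDerivAt (hA : IsArgBranchOn A w S) {t : ℝ} {w' : ℂ} (hS : S ∈ 𝓝 t)
    (hw : HasDerivAt w w' t) (h0 : w t ≠ 0) : HasDerivAt A (w' / w t).im t := by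
  set B : ℝ → ℝ := fun s => A t + (Complex.log (w s / w t)).im
  have hq1 : w t / w t = 1 := div_self h0
  have hB : HasDerivAt B (w' / w t).im t := by
    have hlog := (hw.div_const (w t)).clog_real (by rw [hq1]; exact Complex.one_mem_slitPlane)
    rw [hq1, div_one] at hlog
    exact (Complex.imCLM.hasFDerivAt.comp_hasDerivAt t hlog).const_add (A t)
  have hexp : ∀ᶠ s in 𝓝 t,
      Complex.exp (Complex.I * (A s : ℂ)) = Complex.exp (Complex.I * (B s : ℂ)) := by
    filter_upwards [hS, hw.continuousAt.eventually_ne h0] with s hs hws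
    have hnt : ((‖w t‖ : ℝ) : ℂ) ≠ 0 := Complex.ofReal_ne_zero.2 (norm_ne_zero_iff.2 h0)
    have hns : ((‖w s‖ : ℝ) : ℂ) ≠ 0 := Complex.ofReal_ne_zero.2 (norm_ne_zero_iff.2 hws)
    simp only [B, Complex.log_im, Complex.ofReal_add, mul_add, Complex.exp_add,
      hA.2 s hs, hA.2 t (mem_of_mem_nhds hS), Complex.exp_I_mul_arg (div_ne_zero hws h0),
      norm_div, Complex.ofReal_div]
    field_simp
  have hclose : ∀ᶠ s in 𝓝 t, |A s - B s| < 2 * Real.pi := by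
    have hcont : ContinuousAt (fun s => A s - B s) t :=
      (hA.1.continuousAt hS).sub hB.continuousAt
    have hBt : A t - B t = 0 := by simp [B, hq1]
    filter_upwards [hcont.eventually (Metric.ball_mem_nhds _ Real.two_pi_pos)] with s hs
    simpa [hBt, Real.dist_eq] using hs
  refine hB.congr_of_eventuallyEq ?_
  filter_upwards [hexp, hclose] with s hs hsB
  obtain ⟨n, hn⟩ := Complex.exp_eq_exp_iff_exists_int.1 hs
  have hAB : A s - B s = n * (2 * Real.pi) := by
    have : A s = B s + n * (2 * Real.pi) := by simpa [mul_comm] using congrArg Complex.im hn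
    linarith
  have hn0 : n = 0 := by
    rw [hAB, abs_mul, abs_of_pos Real.two_pi_pos] at hsB
    have : |(n : ℝ)| < 1 := by nlinarith [Real.two_pi_pos]
    rwa [← Int.cast_abs, ← Int.cast_one, Int.cast_lt, Int.abs_lt_one_iff] at this
  simp only [hn0, Int.cast_zero, zero_mul] at hAB
  linarith

lemma abs_sub_le_integral {w' : ℝ → ℂ} {g : ℝ → ℝ} {u v : ℝ} (huv : u ≤ v)
    (hA : IsArgBranchOn A w (Icc u v))
    (hw : ∀ x ∈ Icc u v, HasDerivWithinAt w (w' x) (Icc u v) x)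
    (hw' : ContinuousOn w' (Icc u v)) (hw0 : ∀ x ∈ Icc u v, w x ≠ 0)
    (hg : IntervalIntegrable g volume u v) (hbound : ∀ x ∈ Icc u v, |(w' x / w x).im| ≤ g x) :
    |A v - A u| ≤ ∫ x in u..v, g x := by
  have hcont : ContinuousOn (fun x => (w' x / w x).im) (Icc u v) :=
    Complex.continuous_im.comp_continuousOn
      (hw'.div (fun x hx => (hw x hx).continuousWithinAt) hw0)
  have hint : IntervalIntegrable (fun x => (w' x / w x).im) volume u v :=
    hcont.intervalIntegrable_of_Icc huv
  have hftc : ∫ x in u..v, (w' x / w x).im = A v - A u := by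
    refine intervalIntegral.integral_eq_sub_of_hasDerivAt_of_le huv hA.1 (fun x hx => ?_) hint
    have hx : Icc u v ∈ 𝓝 x := Icc_mem_nhds hx.1 hx.2
    exact hA.hasDerivAt hx ((hw x (mem_of_mem_nhds hx)).hasDerivAt hx) (hw0 x (mem_of_mem_nhds hx))
  calc |A v - A u| = |∫ x in u..v, (w' x / w x).im| := by rw [hftc]
    _ ≤ ∫ x in u..v, |(w' x / w x).im| := intervalIntegral.abs_integral_le_integral_abs huv
    _ ≤ ∫ x in u..v, g x := intervalIntegral.integral_mono_on huv hint.abs hg hbound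

end IsArgBranchOn

lemma eVariationOn_le_of_abs_sub_le_integral {f g : ℝ → ℝ} {s : Set ℝ} {K : ℝ}
    (hg : ∀ u ∈ s, ∀ v ∈ s, u ≤ v → IntervalIntegrable g volume u v)
    (hf : ∀ u ∈ s, ∀ v ∈ s, u ≤ v → |f v - f u| ≤ ∫ x in u..v, g x)
    (hK : ∀ u ∈ s, ∀ v ∈ s, u ≤ v → ∫ x in u..v, g x ≤ K) :
    eVariationOn f s ≤ ENNReal.ofReal K := by
  refine iSup_le fun ⟨n, u, hu, us⟩ => ?_
  have hstep : ∀ i, u i ≤ u (i + 1) := fun i => hu (Nat.le_succ i)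
  calc ∑ i ∈ Finset.range n, edist (f (u (i + 1))) (f (u i))
      = ENNReal.ofReal (∑ i ∈ Finset.range n, |f (u (i + 1)) - f (u i)|) := by
        rw [ENNReal.ofReal_sum_of_nonneg fun i _ => abs_nonneg _]
        simp only [edist_dist, Real.dist_eq]
    _ ≤ ENNReal.ofReal (∑ i ∈ Finset.range n, ∫ x in u i..u (i + 1), g x) :=
        ENNReal.ofReal_le_ofReal <| Finset.sum_le_sum fun i _ => hf _ (us i) _ (us _) (hstep i)
    _ = ENNReal.ofReal (∫ x in u 0..u n, g x) := by
        rw [intervalIntegral.sum_integral_adjacent_intervals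
          fun i _ => hg _ (us i) _ (us _) (hstep i)]
    _ ≤ ENNReal.ofReal K := ENNReal.ofReal_le_ofReal (hK _ (us 0) _ (us n) (hu (Nat.zero_le n)))

lemma intervalIntegrable_comp_abs_sub_and_integral_le {f : ℝ → ℝ} {δ s₀ u v : ℝ}
    (hf : IntegrableOn f (Ioc 0 δ)) (hf0 : ∀ t ∈ Ioc 0 δ, 0 ≤ f t) (huv : u ≤ v)
    (hside : s₀ ≤ u ∨ v ≤ s₀) (hu : s₀ - δ ≤ u) (hv : v ≤ s₀ + δ) :
    IntervalIntegrable (fun x => f |x - s₀|) volume u v ∧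
      ∫ x in u..v, f |x - s₀| ≤ ∫ t in Ioc 0 δ, f t := by
  have hsub : ∀ p q, 0 ≤ p → p ≤ q → q ≤ δ →
      IntervalIntegrable f volume p q ∧ ∫ t in p..q, f t ≤ ∫ t in Ioc 0 δ, f t := by
    intro p q hp hpq hq
    have hpqδ : Ioc p q ⊆ Ioc 0 δ := Ioc_subset_Ioc hp hq
    refine ⟨(intervalIntegrable_iff_integrableOn_Ioc_of_le hpq).2 (hf.mono_set hpqδ), ?_⟩
    rw [intervalIntegral.integral_of_le hpq]
    exact setIntegral_mono_set hf ((ae_restrict_iff' measurableSet_Ioc).2 (ae_of_all _ hf0))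
      hpqδ.eventuallyLE
  rcases hside with h | h
  · have heq : EqOn (fun x => f (x - s₀)) (fun x => f |x - s₀|) (uIcc u v) := fun x hx => by
      rw [uIcc_of_le huv] at hx
      simp only [abs_of_nonneg (sub_nonneg.2 (h.trans hx.1))]
    obtain ⟨hint, hle⟩ := hsub (u - s₀) (v - s₀) (by linarith) (by linarith) (by linarith)
    have hint' := hint.comp_sub_right s₀
    simp only [sub_add_cancel] at hint'
    refine ⟨(intervalIntegrable_congr (heq.mono uIoc_subset_uIcc)).1 hint', ?_⟩
    rwa [← intervalIntegral.integral_congr heq, intervalIntegral.integral_comp_sub_right]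
  · have heq : EqOn (fun x => f (s₀ - x)) (fun x => f |x - s₀|) (uIcc u v) := fun x hx => by
      rw [uIcc_of_le huv] at hx
      simp only [abs_of_nonpos (sub_nonpos.2 (hx.2.trans h)), neg_sub]
    obtain ⟨hint, hle⟩ := hsub (s₀ - v) (s₀ - u) (by linarith) (by linarith) (by linarith)
    have hint' := (hint.comp_sub_left s₀).symm
    simp only [sub_sub_cancel] at hint'
    refine ⟨(intervalIntegrable_congr (heq.mono uIoc_subset_uIcc)).1 hint', ?_⟩
    rwa [← intervalIntegral.integral_congr heq, intervalIntegral.integral_comp_sub_left]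

namespace IsDiniSmoothArc

variable {z z' : ℝ → ℂ} {a b x s₀ : ℝ}

lemma sub_ne_zero_of_modCont_le (harc : IsDiniSmoothArc z z' a b)
    (hunit : ∀ s ∈ Icc a b, ‖z' s‖ = 1) (hx : x ∈ Icc a b) (hs₀ : s₀ ∈ Icc a b) (hne : x ≠ s₀)
    (hω : modCont z' a b |x - s₀| ≤ 1 / 2) : z x - z s₀ ≠ 0 := by
  have hchord := half_abs_le_norm_of_norm_mul_sub_le (hunit x hx) hω
    (norm_mul_sub_sub_le_modCont harc.deriv harc.cont hs₀ hx)
  have hpos : 0 < |x - s₀| := abs_pos.2 (sub_ne_zero.2 hne)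
  exact norm_pos_iff.1 (by linarith)

lemma abs_im_div_sub_le_of_modCont_le (harc : IsDiniSmoothArc z z' a b)
    (hunit : ∀ s ∈ Icc a b, ‖z' s‖ = 1) (hx : x ∈ Icc a b) (hs₀ : s₀ ∈ Icc a b) (hne : x ≠ s₀)
    (hω : modCont z' a b |x - s₀| ≤ 1 / 2) :
    |(z' x / (z x - z s₀)).im| ≤ 2 * (modCont z' a b |x - s₀| / |x - s₀|) :=
  abs_im_div_le_of_norm_mul_sub_le (sub_ne_zero.2 hne) (hunit x hx) hω
    (norm_mul_sub_sub_le_modCont harc.deriv harc.cont hs₀ hx)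

lemma eVariationOn_arg_le {c d δ : ℝ} {A : ℝ → ℝ} {s : Set ℝ}
    (harc : IsDiniSmoothArc z z' a b) (hunit : ∀ s ∈ Icc a b, ‖z' s‖ = 1) (hδ : δ ≤ 1)
    (hω : ∀ t < δ, modCont z' a b t ≤ 1 / 2) (hcd : Icc c d ⊆ Icc a b) (hlen : d - c < δ)
    (hs₀ : s₀ ∈ Icc c d) (hA : IsArgBranchOn A (fun x => z x - z s₀) s) (hs : s.OrdConnected)
    (hsub : s ⊆ Icc c d \ {s₀}) :
    eVariationOn A s ≤ ENNReal.ofReal (2 * ∫ t in Ioc 0 δ, modCont z' a b t / t) := by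
  set f : ℝ → ℝ := fun t => 2 * (modCont z' a b t / t)
  have hf : IntegrableOn f (Ioc 0 δ) := (harc.dini.mono_set (Ioc_subset_Ioc_right hδ)).const_mul 2
  have hf0 : ∀ t ∈ Ioc 0 δ, 0 ≤ f t := fun t ht =>
    mul_nonneg zero_le_two (div_nonneg (modCont_nonneg harc.cont harc.lt.le ht.1.le) ht.1.le)
  have hclose : ∀ x ∈ Icc c d, modCont z' a b |x - s₀| ≤ 1 / 2 := fun x hx =>
    hω _ ((abs_sub_le_iff.2 ⟨by linarith [hx.2, hs₀.1], by linarith [hx.1, hs₀.2]⟩).trans_lt hlen)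
  have hint : ∀ u ∈ s, ∀ v ∈ s, u ≤ v → IntervalIntegrable (fun x => f |x - s₀|) volume u v ∧
      ∫ x in u..v, f |x - s₀| ≤ ∫ t in Ioc 0 δ, f t := by
    intro u hu v hv huv
    have hside : s₀ ≤ u ∨ v ≤ s₀ := by
      by_contra! h
      exact (hsub (hs.out hu hv ⟨h.1.le, h.2.le⟩)).2 rfl
    exact intervalIntegrable_comp_abs_sub_and_integral_le hf hf0 huv hside
      (by linarith [(hsub hu).1.1, hs₀.2]) (by linarith [(hsub hv).1.2, hs₀.1])
  have hincr : ∀ u ∈ s, ∀ v ∈ s, u ≤ v → |A v - A u| ≤ ∫ x in u..v, f |x - s₀| := by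
    intro u hu v hv huv
    have huvs : Icc u v ⊆ s := hs.out hu hv
    have huvab : Icc u v ⊆ Icc a b := (huvs.trans hsub).trans (sdiff_subset.trans hcd)
    have hpt : ∀ x ∈ Icc u v, x ∈ Icc a b ∧ x ≠ s₀ ∧ modCont z' a b |x - s₀| ≤ 1 / 2 :=
      fun x hx => ⟨huvab hx, (hsub (huvs hx)).2, hclose x (hsub (huvs hx)).1⟩
    have hs₀ab : s₀ ∈ Icc a b := hcd hs₀
    refine (hA.mono huvs).abs_sub_le_integral huv
      (fun x hx => ((harc.deriv x (huvab hx)).mono huvab).sub_const (z s₀))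
      (harc.cont.mono huvab) (fun x hx => ?_) (hint u hu v hv huv).1 (fun x hx => ?_)
    · obtain ⟨hxab, hne, hxω⟩ := hpt x hx
      exact harc.sub_ne_zero_of_modCont_le hunit hxab hs₀ab hne hxω
    · obtain ⟨hxab, hne, hxω⟩ := hpt x hx
      exact harc.abs_im_div_sub_le_of_modCont_le hunit hxab hs₀ab hne hxω
  rw [← integral_const_mul]
  exact eVariationOn_le_of_abs_sub_le_integral (fun u hu v hv huv => (hint u hu v hv huv).1)
    hincr (fun u hu v hv huv => (hint u hu v hv huv).2)

end IsDiniSmoothArc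

/-- **Gaier.** Let `z : [a,b] → ℂ` be an arc-length parametrization
(`|z'(s)| = 1`) of a Dini-smooth Jordan arc, with modulus of continuity `ω = modCont z' a b`.
There exists `δ > 0` such that for every interval `I = [c, d] ⊆ [a, b]` of length `< δ` and
every `s₀ ∈ I`, every continuous branch `A` of `s ↦ arg (z(s) − z(s₀))` on `I ∖ {s₀}` has
total variation (summed over the two components of `I ∖ {s₀}`) at most `8 ∫₀^δ ω(t)/t dt`. -/
theorem dini_arc_local_argument_variation
    (z z' : ℝ → ℂ) (a b : ℝ)
    (harc : IsDiniSmoothArc z z' a b)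
    (hunit : ∀ s ∈ Set.Icc a b, ‖z' s‖ = 1) :
    ∃ δ : ℝ, 0 < δ ∧
      ∀ c d : ℝ, Set.Icc c d ⊆ Set.Icc a b → d - c < δ →
        ∀ s₀ ∈ Set.Icc c d, ∀ A : ℝ → ℝ,
          ContinuousOn A (Set.Icc c d \ {s₀}) →
          (∀ s ∈ Set.Icc c d \ {s₀},
            Complex.exp (Complex.I * (A s : ℂ))
              = (z s - z s₀) / ((‖z s - z s₀‖ : ℝ) : ℂ)) →
          eVariationOn A (Set.Ico c s₀) + eVariationOn A (Set.Ioc s₀ d)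
            ≤ ENNReal.ofReal (8 * ∫ t in Set.Ioc (0 : ℝ) δ, modCont z' a b t / t) := by
  obtain ⟨δ₀, hδ₀, hω⟩ := exists_pos_forall_modCont_le harc.cont (by norm_num : (0 : ℝ) < 1 / 2)
  refine ⟨min δ₀ 1, lt_min hδ₀ one_pos, fun c d hcd hlen s₀ hs₀ A hA hbranch => ?_⟩
  have hside : ∀ s : Set ℝ, s.OrdConnected → s ⊆ Icc c d \ {s₀} →
      eVariationOn A s ≤ ENNReal.ofReal (2 * ∫ t in Ioc 0 (min δ₀ 1), modCont z' a b t / t) :=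
    fun s hs hsub => harc.eVariationOn_arg_le hunit (min_le_right _ _)
      (fun t ht => hω t (ht.trans_le (min_le_left _ _))) hcd hlen hs₀
      (IsArgBranchOn.mono ⟨hA, hbranch⟩ hsub) hs hsub
  have hleft := hside (Ico c s₀) ordConnected_Ico
    fun x hx => ⟨⟨hx.1, hx.2.le.trans hs₀.2⟩, hx.2.ne⟩
  have hright := hside (Ioc s₀ d) ordConnected_Ioc
    fun x hx => ⟨⟨hs₀.1.trans hx.1.le, hx.2⟩, hx.1.ne'⟩
  have hI : 0 ≤ ∫ t in Ioc 0 (min δ₀ 1), modCont z' a b t / t :=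
    setIntegral_nonneg measurableSet_Ioc fun t ht =>
      div_nonneg (modCont_nonneg harc.cont harc.lt.le ht.1.le) ht.1.le
  calc _ ≤ _ := add_le_add hleft hright
    _ ≤ _ := by
      rw [← ENNReal.ofReal_add (by positivity) (by positivity)]
      exact ENNReal.ofReal_le_ofReal (by linarith)
end
end

section
/- Let w_1,…,w_l be points on the unit circle in ℂ and let m ∈ ℕ. Then there exist a positive integer d, complex coefficients a_1,…,a_d, and δ > 0 such that the function P(w) := 1 + Σ_{j=1}^{d} a_j w^{−j} satisfies: (i) max_{|w|=1} |P(w)| < m^{−1} + 2^{l/m}, and (ii) |P(e^{iθ})| < 1/2 + 1/m whenever |θ − θ_k| < δ for some k, where w_k = e^{iθ_k}. -/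
open Filter Topology MeasureTheory Set

noncomputable section

/-! The weight `g_m(w) = ∏ₖ (1 − r wₖ/w)^{1/m}` is holomorphic in `1/w` on a disc of radius
`1/r > 1`, so its Taylor polynomials in `1/w` converge to it uniformly on the unit circle.
On the circle `|g_m|^m = ∏ₖ |1 − r wₖ/w| ≤ 2^l`, while near `wₖ` one factor is of size
`≈ 1 − r`; taking `1 − r = δ = 2^{−(m+l)}` this forces `|g_m| < 1/2` there. -/

open Complex

theorem eventually_exists_taylor_approx {g : ℂ → ℂ} {R ρ : ℝ}
    (hg : DifferentiableOn ℂ g (Metric.closedBall 0 R)) (hρ : 0 ≤ ρ) (hρR : ρ < R)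
    {ε : ℝ} (hε : 0 < ε) :
    ∀ᶠ d in atTop, ∃ a : Fin d → ℂ, ∀ x ∈ Metric.closedBall (0 : ℂ) ρ,
      ‖g 0 + ∑ j : Fin d, a j * x ^ ((j : ℕ) + 1) - g x‖ < ε := by
  lift R to NNReal using hρ.trans hρR.le
  lift ρ to NNReal using hρ
  obtain ⟨ρ', hρρ', hρ'R⟩ := exists_between (α := NNReal) (by exact_mod_cast hρR)
  have hp := hg.hasFPowerSeriesOnBall (pos_of_gt hρ'R)
  set p := cauchyPowerSeries g 0 R
  have hunif := Metric.tendstoUniformlyOn_iff.mp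
    (hp.tendstoUniformlyOn (r' := ρ') (by exact_mod_cast hρ'R)) ε hε
  filter_upwards [(tendsto_add_atTop_nat 1).eventually hunif] with d hd
  refine ⟨fun j => p.coeff ((j : ℕ) + 1), fun x hx => ?_⟩
  have hsum : p.partialSum (d + 1) x =
      g 0 + ∑ j : Fin d, p.coeff ((j : ℕ) + 1) * x ^ ((j : ℕ) + 1) := by
    simp only [FormalMultilinearSeries.partialSum, FormalMultilinearSeries.apply_eq_pow_smul_coeff,
      smul_eq_mul, Finset.sum_range_succ', pow_zero, one_mul]
    rw [FormalMultilinearSeries.coeff, hp.coeff_zero, add_comm,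
      Fin.sum_univ_eq_sum_range (fun j => p.coeff (j + 1) * x ^ (j + 1))]
    simp only [mul_comm]
  rw [← hsum, ← dist_eq_norm']
  simpa using hd x (Metric.closedBall_subset_ball (by exact_mod_cast hρρ') hx)

/-- In the paper's variable `w`, `g_m(w) = weightFunction m (fun k => r * w k) w⁻¹`. -/
def weightFunction {ι : Type*} [Fintype ι] (m : ℕ) (c : ι → ℂ) (x : ℂ) : ℂ :=
  exp ((m : ℂ)⁻¹ * ∑ k, log (1 - c k * x))

section weightFunction

variable {ι : Type*} [Fintype ι] {m : ℕ} {c : ι → ℂ}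

@[simp]
theorem weightFunction_zero : weightFunction m c 0 = 1 := by
  simp [weightFunction]

theorem re_one_sub_pos {z : ℂ} (hz : ‖z‖ < 1) : 0 < (1 - z).re := by
  rw [sub_re, one_re]
  linarith [re_le_norm z]

theorem differentiableOn_weightFunction {R : ℝ} (hc : ∀ k, ‖c k‖ * R < 1) :
    DifferentiableOn ℂ (weightFunction m c) (Metric.closedBall 0 R) := by
  refine (DifferentiableOn.fun_sum fun k _ => DifferentiableOn.clog (by fun_prop) fun x hx => ?_)
    |>.const_mul _ |>.cexp
  refine Or.inl (re_one_sub_pos ?_)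
  rw [norm_mul]
  exact (mul_le_mul_of_nonneg_left (by simpa using hx) (norm_nonneg _)).trans_lt (hc k)

theorem exists_norm_taylor_lt_add_norm_weightFunction {R : ℝ} (hR : 1 < R)
    (hc : ∀ k, ‖c k‖ * R < 1) {ε : ℝ} (hε : 0 < ε) :
    ∃ d > 0, ∃ a : Fin d → ℂ, ∀ x : ℂ, ‖x‖ ≤ 1 →
      ‖1 + ∑ j : Fin d, a j * x ^ ((j : ℕ) + 1)‖ < ε + ‖weightFunction m c x‖ := by
  obtain ⟨d, ⟨a, ha⟩, hd⟩ := ((eventually_exists_taylor_approx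
    (differentiableOn_weightFunction hc) zero_le_one hR hε).and (eventually_gt_atTop 0)).exists
  refine ⟨d, hd, a, fun x hx => ?_⟩
  have hx := ha x (by simpa using hx)
  rw [weightFunction_zero] at hx
  linarith [norm_sub_norm_le (1 + ∑ j : Fin d, a j * x ^ ((j : ℕ) + 1)) (weightFunction m c x)]

theorem weightFunction_pow (hm : m ≠ 0) {x : ℂ} (hx : ∀ k, 1 - c k * x ≠ 0) :
    weightFunction m c x ^ m = ∏ k, (1 - c k * x) := by
  rw [weightFunction, ← exp_nat_mul, ← mul_assoc, mul_inv_cancel₀ (by exact_mod_cast hm), one_mul,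
    exp_sum]
  exact Finset.prod_congr rfl fun k _ => exp_log (hx k)

theorem norm_weightFunction_pow (hm : m ≠ 0) {x : ℂ} (hcx : ∀ k, ‖c k * x‖ < 1) :
    ‖weightFunction m c x‖ ^ m = ∏ k, ‖1 - c k * x‖ := by
  rw [← norm_pow, weightFunction_pow hm fun k => ?_, norm_prod]
  exact fun h => (re_one_sub_pos (hcx k)).ne' (by rw [h, zero_re])

theorem norm_one_sub_le_two {z : ℂ} (hz : ‖z‖ < 1) : ‖1 - z‖ ≤ 2 := by
  linarith [norm_sub_le (1 : ℂ) z, norm_one (α := ℂ)]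

theorem norm_weightFunction_le (hm : m ≠ 0) {x : ℂ} (hcx : ∀ k, ‖c k * x‖ < 1) :
    ‖weightFunction m c x‖ ≤ 2 ^ ((Fintype.card ι : ℝ) / m) := by
  rw [← pow_le_pow_iff_left₀ (norm_nonneg _) (by positivity) hm, norm_weightFunction_pow hm hcx,
    ← Real.rpow_natCast _ m, ← Real.rpow_mul zero_le_two, div_mul_cancel₀ _ (by exact_mod_cast hm),
    Real.rpow_natCast]
  calc ∏ k, ‖1 - c k * x‖ ≤ ∏ _k : ι, (2 : ℝ) :=
        Finset.prod_le_prod (fun _ _ => norm_nonneg _) fun k _ => norm_one_sub_le_two (hcx k)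
    _ = 2 ^ Fintype.card ι := by rw [Finset.prod_const, Finset.card_univ]

theorem norm_weightFunction_lt_half [DecidableEq ι] (hm : m ≠ 0) {x : ℂ}
    (hcx : ∀ k, ‖c k * x‖ < 1) (k : ι)
    (hk : ‖1 - c k * x‖ < 2 / 2 ^ (m + Fintype.card ι)) :
    ‖weightFunction m c x‖ < 1 / 2 := by
  rw [← pow_lt_pow_iff_left₀ (norm_nonneg _) (by positivity) hm, norm_weightFunction_pow hm hcx,
    ← Finset.mul_prod_erase _ _ (Finset.mem_univ k)]
  have hrest : ∏ j ∈ Finset.univ.erase k, ‖1 - c j * x‖ ≤ 2 ^ (Fintype.card ι - 1) := by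
    calc ∏ j ∈ Finset.univ.erase k, ‖1 - c j * x‖ ≤ ∏ _j ∈ Finset.univ.erase k, (2 : ℝ) :=
          Finset.prod_le_prod (fun _ _ => norm_nonneg _) fun j _ => norm_one_sub_le_two (hcx j)
      _ = 2 ^ (Fintype.card ι - 1) := by
        rw [Finset.prod_const, Finset.card_erase_of_mem (Finset.mem_univ k), Finset.card_univ]
  have hcard : 2 ^ (m + Fintype.card ι) = 2 ^ m * 2 ^ (Fintype.card ι - 1) * (2 : ℝ) := by
    rw [mul_assoc, ← pow_succ, ← pow_add, Nat.sub_add_cancel (Fintype.card_pos_iff.mpr ⟨k⟩)]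
  calc ‖1 - c k * x‖ * ∏ j ∈ Finset.univ.erase k, ‖1 - c j * x‖
      ≤ ‖1 - c k * x‖ * 2 ^ (Fintype.card ι - 1) :=
        mul_le_mul_of_nonneg_left hrest (norm_nonneg _)
    _ < 2 / 2 ^ (m + Fintype.card ι) * 2 ^ (Fintype.card ι - 1) :=
        mul_lt_mul_of_pos_right hk (by positivity)
    _ = (1 / 2) ^ m := by
        rw [hcard, one_div_pow]
        field_simp

end weightFunction

theorem norm_one_sub_mul_exp_mul_exp_inv_lt {ε θ θ₀ : ℝ} (h : |θ - θ₀| < ε) :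
    ‖1 - ((1 - ε : ℝ) : ℂ) * exp (I * θ₀) * (exp (I * θ))⁻¹‖ < 2 * ε := by
  have hε : 0 < ε := (abs_nonneg _).trans_lt h
  have hrot : exp (I * θ₀) * (exp (I * θ))⁻¹ = exp (I * ↑(θ₀ - θ)) := by
    rw [← exp_neg, ← exp_add]
    push_cast
    ring_nf
  have hsplit : 1 - ((1 - ε : ℝ) : ℂ) * exp (I * θ₀) * (exp (I * θ))⁻¹
      = (ε : ℂ) * exp (I * ↑(θ₀ - θ)) - (exp (I * ↑(θ₀ - θ)) - 1) := by
    rw [mul_assoc, hrot]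
    push_cast
    ring
  calc _ ≤ ‖(ε : ℂ) * exp (I * ↑(θ₀ - θ))‖ + ‖exp (I * ↑(θ₀ - θ)) - 1‖ :=
        hsplit ▸ norm_sub_le _ _
    _ ≤ ε + ‖θ₀ - θ‖ := by
        rw [norm_mul, norm_exp_I_mul_ofReal, mul_one, norm_real, Real.norm_eq_abs, abs_of_pos hε]
        gcongr
        exact Real.norm_exp_I_mul_ofReal_sub_one_le
    _ < 2 * ε := by
        rw [Real.norm_eq_abs, abs_sub_comm]
        linarith

/-- Let `w_1, …, w_l` be points on the unit circle, `w_k = e^{iθ_k}`, and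
let `m ∈ ℕ`, `m > 0`. Then there are `d ≥ 1`, coefficients `a_1, …, a_d ∈ ℂ` and `δ > 0` such
that `P(w) = 1 + Σ_{j=1}^d a_j w^{−j}` satisfies `|P(w)| < m⁻¹ + 2^{l/m}` for all `|w| = 1`,
and `|P(e^{iθ})| < 1/2 + 1/m` whenever `|θ − θ_k| < δ` for some `k`. -/
theorem truncated_weight_function_bounds
    (l : ℕ) (w : Fin l → ℂ) (θk : Fin l → ℝ)
    (hw : ∀ k, w k = Complex.exp (Complex.I * (θk k : ℂ)))
    (m : ℕ) (hm : 0 < m) :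
    ∃ (d : ℕ) (a : Fin d → ℂ) (δ : ℝ), 0 < d ∧ 0 < δ ∧
      (∀ u : ℂ, ‖u‖ = 1 →
        ‖(1 : ℂ) + ∑ j : Fin d, a j * (u⁻¹) ^ ((j : ℕ) + 1)‖
          < (m : ℝ)⁻¹ + (2 : ℝ) ^ ((l : ℝ) / (m : ℝ))) ∧
      (∀ (θ : ℝ) (k : Fin l), |θ - θk k| < δ →
        ‖(1 : ℂ) + ∑ j : Fin d,
            a j * ((Complex.exp (Complex.I * (θ : ℂ)))⁻¹) ^ ((j : ℕ) + 1)‖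
          < 1 / 2 + 1 / (m : ℝ)) := by
  set ε : ℝ := 1 / 2 ^ (m + l)
  have hε : 0 < ε := by positivity
  have hε1 : ε < 1 := by
    rw [div_lt_one (by positivity)]
    exact one_lt_pow₀ one_lt_two (by omega)
  set c : Fin l → ℂ := fun k => ((1 - ε : ℝ) : ℂ) * w k
  have hc : ∀ k, ‖c k‖ = 1 - ε := fun k => by
    rw [norm_mul, hw, norm_exp_I_mul_ofReal, norm_real, Real.norm_eq_abs, abs_of_pos (by linarith),
      mul_one]
  have hcx : ∀ x : ℂ, ‖x‖ = 1 → ∀ k, ‖c k * x‖ < 1 := fun x hx k => by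
    rw [norm_mul, hc, hx]
    linarith
  obtain ⟨d, hd, a, happrox⟩ := exists_norm_taylor_lt_add_norm_weightFunction (m := m) (c := c)
    (by linarith : 1 < 1 + ε) (fun k => by rw [hc]; nlinarith) (inv_pos.mpr (Nat.cast_pos.mpr hm))
  refine ⟨d, a, ε, hd, hε, fun u hu => ?_, fun θ k hθ => ?_⟩
  · have hu' : ‖u⁻¹‖ = 1 := by rw [norm_inv, hu, inv_one]
    have := norm_weightFunction_le hm.ne' (hcx _ hu')
    rw [Fintype.card_fin] at this
    linarith [happrox _ hu'.le]
  · set x := (exp (I * θ))⁻¹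
    have hx : ‖x‖ = 1 := by rw [norm_inv, norm_exp_I_mul_ofReal, inv_one]
    have hcorner : ‖1 - c k * x‖ < 2 / 2 ^ (m + Fintype.card (Fin l)) := by
      rw [Fintype.card_fin, ← mul_one_div]
      simpa only [c, hw] using norm_one_sub_mul_exp_mul_exp_inv_lt hθ
    have := norm_weightFunction_lt_half hm.ne' (hcx x hx) k hcorner
    linarith [happrox x hx.le, one_div (m : ℝ)]

end
end
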